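/- If pqs(n,cs,us,ds) is in the correctness specification S_pqs with n > 0 and cs a list of length n, then cs is a list of the distinct numbers 1,…,n (a permutation of 1,…,n) solving the n queens problem: the up diagonal numbers j+k and down diagonal numbers k−j of the queens (queen j at position k) are pairwise distinct. -/

import Mathlib

/-- Ground terms of the Herbrand universe: numerals built from `zero`/`succ`,
list constructors `cons`/`nil`, and infinitely many other constants `sym n`. -/
inductive Term : Type
  | zero : Term
  | succ : Term → Term
  | cons : Term → Term → Term
  | nil  : Term
  | sym  : ℕ → Term
deriving DecidableEq

/-- The numeral `sⁱ(0)` representing a natural number. -/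
def num : ℕ → Term
  | 0 => Term.zero
  | n + 1 => Term.succ (num n)

/-- `NthMember k e t` : `e` is the `k`-th member (k ≥ 1) of the term `t`,
i.e. `t = [e₁,…,e_{k-1}, e | t']`. -/
def NthMember : ℕ → Term → Term → Prop
  | 0, _, _ => False
  | 1, e, t => ∃ r, t = Term.cons e r
  | k + 2, e, t => ∃ h r, t = Term.cons h r ∧ NthMember (k + 1) e r

/-- `e` is a member of the term `t`. -/
def IsMember (e t : Term) : Prop := ∃ k, NthMember k e t

/-- `t` is a (proper, nil-terminated) list. -/
inductive IsList : Term → Prop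
  | nil : IsList Term.nil
  | cons (h t : Term) : IsList t → IsList (Term.cons h t)

/-- The members of `cs` are pairwise distinct (no member occurs at two positions). -/
def DistinctMembers (cs : Term) : Prop :=
  ∀ k1 k2 e, NthMember k1 e cs → NthMember k2 e cs → k1 = k2

/-- `(cs,us,ds)` represents a correct placement of queens `1,…,m`
in the context of row `i` (Definition 3 of the paper):
`cs` is a list of distinct members containing `1,…,m`; the up diagonal
numbers `k+j-i` and down diagonal numbers `k+i-j` of the queens `1,…,m`
(queen `j` being the `k`-th member of `cs`) are pairwise distinct; and every
positive such diagonal number `l` of queen `j` is reflected by `j` being the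
`l`-th member of `us` (resp. `ds`). -/
def CorrectUpTo (m i : ℕ) (cs us ds : Term) : Prop :=
  m ≤ i ∧
  IsList cs ∧ DistinctMembers cs ∧
  (∀ j, 1 ≤ j → j ≤ m → IsMember (num j) cs) ∧
  (∀ j1 j2 k1 k2, 1 ≤ j1 → j1 ≤ m → 1 ≤ j2 → j2 ≤ m →
     NthMember k1 (num j1) cs → NthMember k2 (num j2) cs →
     (k1 + j1 : ℤ) - i = (k2 + j2 : ℤ) - i → j1 = j2) ∧
  (∀ j1 j2 k1 k2, 1 ≤ j1 → j1 ≤ m → 1 ≤ j2 → j2 ≤ m →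
     NthMember k1 (num j1) cs → NthMember k2 (num j2) cs →
     (k1 + i : ℤ) - j1 = (k2 + i : ℤ) - j2 → j1 = j2) ∧
  (∀ j k (l : ℤ), 1 ≤ j → j ≤ m → NthMember k (num j) cs →
     (k + j : ℤ) - i = l → 0 < l → NthMember l.toNat (num j) us) ∧
  (∀ j k (l : ℤ), 1 ≤ j → j ≤ m → NthMember k (num j) cs →
     (k + i : ℤ) - j = l → 0 < l → NthMember l.toNat (num j) ds)

/-- Ground atoms of the n-queens program. -/
inductive Atom : Type
  | pq  (i cs us ds : Term)
  | pqs (i cs us ds : Term)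
deriving DecidableEq

/-- A ground clause: a head together with the list of body atoms. -/
abbrev Clause := Atom × List Atom

/-- A (ground instantiation of a) definite program. -/
abbrev Program := Set Clause

/-- `S` is an Herbrand model of `P`. -/
def IsModel (S : Set Atom) (P : Program) : Prop :=
  ∀ c ∈ P, (∀ b ∈ c.2, b ∈ S) → c.1 ∈ S

/-- The least Herbrand model of `P`. -/
def LHM (P : Program) : Set Atom := ⋂₀ {S | IsModel S P}

/-- A ground atom `A` is covered by program `P` w.r.t. specification `S`. -/
def Covered (P : Program) (S : Set Atom) (A : Atom) : Prop :=
  ∃ c ∈ P, c.1 = A ∧ ∀ b ∈ c.2, b ∈ S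

/-- The set of ground instances of the two pq clauses:
`pq(I,[I|_],[I|_],[I|_])` and `pq(I,[_|Cs],[_|Us],[_|Ds]) ← pq(I,Cs,Us,Ds)`. -/
def PQprog : Program :=
  {c | (∃ i x y z, c = (Atom.pq i (Term.cons i x) (Term.cons i y) (Term.cons i z), [])) ∨
       (∃ i c' cs u us d ds,
          c = (Atom.pq i (Term.cons c' cs) (Term.cons u us) (Term.cons d ds),
               [Atom.pq i cs us ds]))}

/-- The set of ground instances of the four clauses of NQUEENS. -/
def NQprog : Program :=
  {c | (∃ x y z, c = (Atom.pqs Term.zero x y z, [])) ∨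
       (∃ i cs us u d ds,
          c = (Atom.pqs (Term.succ i) cs us (Term.cons d ds),
               [Atom.pqs i cs (Term.cons u us) ds, Atom.pq (Term.succ i) cs us ds])) ∨
       (∃ i x y z, c = (Atom.pq i (Term.cons i x) (Term.cons i y) (Term.cons i z), [])) ∨
       (∃ i c' cs u us d ds,
          c = (Atom.pq i (Term.cons c' cs) (Term.cons u us) (Term.cons d ds),
               [Atom.pq i cs us ds]))}

/-- The specification `S_pq`. -/
def Spq : Set Atom :=
  {a | ∃ i cs us ds k, a = Atom.pq i cs us ds ∧ 0 < k ∧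
       NthMember k i cs ∧ NthMember k i us ∧ NthMember k i ds}

/-- The correctness specification `S_pqs`. -/
def Spqs : Set Atom :=
  {a | (∃ cs us ds, a = Atom.pqs Term.zero cs us ds) ∨
       (∃ i cs us t ds, 0 < i ∧ a = Atom.pqs (num i) cs us (Term.cons t ds) ∧
          (∀ j, 1 ≤ j → j ≤ i → IsMember (num j) cs) ∧
          (IsList cs → DistinctMembers cs → CorrectUpTo i i cs us ds))}

/-- The completeness specification `S⁰_pqs`. -/
def S0pqs : Set Atom :=
  {a | ∃ i cs us t ds, 0 < i ∧ a = Atom.pqs (num i) cs us (Term.cons t ds) ∧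
        CorrectUpTo i i cs us ds}

/-- All atoms `pqs(0,cs,us,ds)`. -/
def SpqsZero : Set Atom :=
  {a | ∃ cs us ds, a = Atom.pqs Term.zero cs us ds}

/-- The level mapping on ground terms: `|[h|t]| = 1+|t|`, `|s(t)| = 1+|t|`,
`|f(…)| = 0` otherwise. -/
def tlvl : Term → ℕ
  | Term.cons _ t => 1 + tlvl t
  | Term.succ t => 1 + tlvl t
  | _ => 0

/-- The level mapping on ground atoms. -/
def alvl : Atom → ℕ
  | Atom.pqs i cs _ _ => tlvl i + tlvl cs
  | Atom.pq _ cs _ _ => tlvl cs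

/-- `t` is a list of length `n`. -/
inductive IsListLen : Term → ℕ → Prop
  | nil : IsListLen Term.nil 0
  | cons (h t : Term) (n : ℕ) : IsListLen t n → IsListLen (Term.cons h t) (n + 1)

/-! The specification only promises that `1,…,n` all occur in `cs`, and that the diagonal
conditions hold *provided* `cs` is a list of distinct members. A list of length `n` that contains
the `n` distinct numerals `1,…,n` is a permutation of them (pigeonhole), so it has no repeated
members and the conditional part applies; the diagonal conditions of `CorrectUpTo n n` are the
required ones with the common offset `n` added. -/

lemma num_injective : Function.Injective num := by
  intro a b h
  induction a generalizing b with
  | zero => cases b <;> simp_all [num]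
  | succ a ih =>
    cases b with
    | zero => simp [num] at h
    | succ b => exact congrArg _ (ih (Term.succ.inj h))

namespace Term

def ofList (L : List Term) : Term := L.foldr cons nil

lemma isList_ofList (L : List Term) : IsList (ofList L) := by
  induction L with
  | nil => exact IsList.nil
  | cons a L ih => exact IsList.cons a (ofList L) ih

lemma nthMember_succ_ofList_iff (L : List Term) (e : Term) (i : ℕ) :
    NthMember (i + 1) e (ofList L) ↔ L[i]? = some e := by
  induction L generalizing i with
  | nil => cases i <;> simp [NthMember, ofList]
  | cons a L ih =>
    cases i with
    | zero => simp [NthMember, ofList, eq_comm]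
    | succ i => simpa [NthMember, ofList] using ih i

lemma isMember_ofList_iff (L : List Term) (e : Term) : IsMember e (ofList L) ↔ e ∈ L := by
  rw [List.mem_iff_getElem?]
  constructor
  · rintro ⟨_ | i, h⟩
    · exact h.elim
    · exact ⟨i, (nthMember_succ_ofList_iff L e i).mp h⟩
  · rintro ⟨i, h⟩
    exact ⟨i + 1, (nthMember_succ_ofList_iff L e i).mpr h⟩

lemma distinctMembers_ofList {L : List Term} (hL : L.Nodup) : DistinctMembers (ofList L) := by
  rintro (_ | i₁) (_ | i₂) e h₁ h₂
  · exact h₁.elim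
  · exact h₁.elim
  · exact h₂.elim
  rw [nthMember_succ_ofList_iff] at h₁ h₂
  obtain ⟨hi₁, rfl⟩ := List.getElem?_eq_some_iff.mp h₁
  obtain ⟨hi₂, he⟩ := List.getElem?_eq_some_iff.mp h₂
  rw [(hL.getElem_inj_iff).mp he]

end Term

lemma IsListLen.exists_eq_ofList {cs : Term} {n : ℕ} (h : IsListLen cs n) :
    ∃ L : List Term, cs = Term.ofList L ∧ L.length = n := by
  induction h with
  | nil => exact ⟨[], rfl, rfl⟩
  | cons c _ _ _ ih =>
    obtain ⟨L, rfl, rfl⟩ := ih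
    exact ⟨c :: L, rfl, rfl⟩

lemma List.nodup_of_subset_of_length_le {α : Type*} {l₁ l₂ : List α} (h₁ : l₁.Nodup)
    (hsub : l₁ ⊆ l₂) (hlen : l₂.length ≤ l₁.length) : l₂.Nodup :=
  ((List.subperm_of_subset h₁ hsub).perm_of_length_le hlen).nodup_iff.mp h₁

lemma nodup_of_length_eq_of_forall_num_mem {L : List Term} {n : ℕ} (hlen : L.length = n)
    (hmem : ∀ j, 1 ≤ j → j ≤ n → num j ∈ L) : L.Nodup := by
  refine List.nodup_of_subset_of_length_le (l₁ := (List.range' 1 n).map num)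
    ((List.nodup_range' ..).map num_injective) ?_ (by simp [hlen])
  intro x hx
  obtain ⟨j, hj, rfl⟩ := List.mem_map.mp hx
  rw [List.mem_range'_1] at hj
  exact hmem j hj.1 (by omega)

lemma members_and_correctUpTo_of_pqs_mem_Spqs {n : ℕ} {cs us ds : Term}
    (hS : Atom.pqs (num n) cs us ds ∈ Spqs) :
    (∀ j, 1 ≤ j → j ≤ n → IsMember (num j) cs) ∧
    (IsList cs → DistinctMembers cs → ∃ us' ds', CorrectUpTo n n cs us' ds') := by
  rcases hS with ⟨_, _, _, h⟩ | ⟨i, _, _, _, _, -, h, hmem, hcorr⟩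
  · obtain rfl : n = 0 := num_injective (Atom.pqs.inj h).1
    refine ⟨fun j h₁ h₂ => by omega, fun hcs hd => ⟨us, ds, le_rfl, hcs, hd, ?_⟩⟩
    refine ⟨?_, ?_, ?_, ?_, ?_⟩ <;> intros <;> omega
  · obtain ⟨hn, rfl, -, -⟩ := Atom.pqs.inj h
    obtain rfl := num_injective hn
    exact ⟨hmem, fun hcs hd => ⟨_, _, hcorr hcs hd⟩⟩

namespace CorrectUpTo

variable {m i : ℕ} {cs us ds : Term} {j₁ j₂ k₁ k₂ : ℕ}

lemma add_ne_add (h : CorrectUpTo m i cs us ds) (hj₁ : 1 ≤ j₁) (hj₁m : j₁ ≤ m) (hj₂ : 1 ≤ j₂)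
    (hj₂m : j₂ ≤ m) (hk₁ : NthMember k₁ (num j₁) cs) (hk₂ : NthMember k₂ (num j₂) cs)
    (hne : j₁ ≠ j₂) : (j₁ + k₁ : ℤ) ≠ j₂ + k₂ :=
  fun heq => hne (h.2.2.2.2.1 j₁ j₂ k₁ k₂ hj₁ hj₁m hj₂ hj₂m hk₁ hk₂ (by omega))

lemma sub_ne_sub (h : CorrectUpTo m i cs us ds) (hj₁ : 1 ≤ j₁) (hj₁m : j₁ ≤ m) (hj₂ : 1 ≤ j₂)
    (hj₂m : j₂ ≤ m) (hk₁ : NthMember k₁ (num j₁) cs) (hk₂ : NthMember k₂ (num j₂) cs)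
    (hne : j₁ ≠ j₂) : (k₁ - j₁ : ℤ) ≠ k₂ - j₂ :=
  fun heq => hne (h.2.2.2.2.2.1 j₁ j₂ k₁ k₂ hj₁ hj₁m hj₂ hj₂m hk₁ hk₂ (by omega))

end CorrectUpTo

theorem Spqs_list_gives_solution_general (n : ℕ) (cs us ds : Term)
    (hlen : IsListLen cs n)
    (hS : Atom.pqs (num n) cs us ds ∈ Spqs) :
    (∀ j, 1 ≤ j → j ≤ n → IsMember (num j) cs) ∧
    DistinctMembers cs ∧
    (∀ j1 j2 k1 k2, 1 ≤ j1 → j1 ≤ n → 1 ≤ j2 → j2 ≤ n →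
       NthMember k1 (num j1) cs → NthMember k2 (num j2) cs →
       j1 ≠ j2 → (j1 + k1 : ℤ) ≠ (j2 + k2 : ℤ)) ∧
    (∀ j1 j2 k1 k2, 1 ≤ j1 → j1 ≤ n → 1 ≤ j2 → j2 ≤ n →
       NthMember k1 (num j1) cs → NthMember k2 (num j2) cs →
       j1 ≠ j2 → (k1 - j1 : ℤ) ≠ (k2 - j2 : ℤ)) := by
  obtain ⟨hmem, hcorr⟩ := members_and_correctUpTo_of_pqs_mem_Spqs hS
  obtain ⟨L, rfl, hL⟩ := hlen.exists_eq_ofList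
  have hnodup : L.Nodup := nodup_of_length_eq_of_forall_num_mem hL fun j h₁ h₂ =>
    (Term.isMember_ofList_iff L _).mp (hmem j h₁ h₂)
  have hdist := Term.distinctMembers_ofList hnodup
  obtain ⟨us', ds', hc⟩ := hcorr (Term.isList_ofList L) hdist
  exact ⟨hmem, hdist, fun _ _ _ _ => hc.add_ne_add, fun _ _ _ _ => hc.sub_ne_sub⟩

/-- If `pqs(n,cs,us,ds) ∈ S_pqs` with `n > 0` and `cs` a list of length `n`,
then `cs` is a list of the distinct numbers `1,…,n` solving the n queens
problem: the up diagonal numbers `j+k` and down diagonal numbers `k-j` of the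
queens (queen `j` at position `k`) are pairwise distinct. -/
theorem Spqs_list_gives_solution (n : ℕ) (cs us ds : Term)
    (hn : 0 < n) (hlen : IsListLen cs n)
    (hS : Atom.pqs (num n) cs us ds ∈ Spqs) :
    (∀ j, 1 ≤ j → j ≤ n → IsMember (num j) cs) ∧
    DistinctMembers cs ∧
    (∀ j1 j2 k1 k2, 1 ≤ j1 → j1 ≤ n → 1 ≤ j2 → j2 ≤ n →
       NthMember k1 (num j1) cs → NthMember k2 (num j2) cs →
       j1 ≠ j2 → (j1 + k1 : ℤ) ≠ (j2 + k2 : ℤ)) ∧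
    (∀ j1 j2 k1 k2, 1 ≤ j1 → j1 ≤ n → 1 ≤ j2 → j2 ≤ n →
       NthMember k1 (num j1) cs → NthMember k2 (num j2) cs →
       j1 ≠ j2 → (k1 - j1 : ℤ) ≠ (k2 - j2 : ℤ)) :=
  Spqs_list_gives_solution_general n cs us ds hlen hS
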